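/- arXiv:2603.14037 — 3 statements merged into one kernel-verified Lean document; each statement's English description precedes it below -/
import Mathlib

section
/- Under the stated assumptions, if h ∈ (0, m_b ε), then there exists a constant C > 0, depending only on K, b, ε, l₀, r₀ and m_b (but not on h, b̂ or the probability space), such that ∫_{b(I_ε)} E(|𝔟̂_h⁻¹(w) − b⁻¹(w)|) dw ≤ C ( h + R(b̂)^{1/2} + R(b̂)/h ). -/
open MeasureTheory

/-- The rescaled kernel `K_η(x) = η⁻¹ K(x/η)`. -/
noncomputable def Kh (K : ℝ → ℝ) (η x : ℝ) : ℝ := η⁻¹ * K (x / η)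

/-- The estimator `𝔟̂_h⁻¹(w) = l₀ - 2ε + ∫_{I_{2ε}} ∫_{-∞}^{-w} K_h(-g(z) - y) dy dz`
of the inverse of `b`, computed from an estimation `g` of `b`. -/
noncomputable def binvEst (K : ℝ → ℝ) (l₀ r₀ ε h : ℝ) (g : ℝ → ℝ) (w : ℝ) : ℝ :=
  (l₀ - 2 * ε) +
    ∫ z in Set.Icc (l₀ - 2 * ε) (r₀ + 2 * ε), ∫ y in Set.Iic (-w), Kh K h (-(g z) - y)

/-!
For `w = b x` with `x ∈ I_ε`, monotonicity gives `b⁻¹(w) - l_{2ε} = |{z ∈ I_{2ε} | w ≤ b z}|`,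
while after the substitution `y ↦ -y - b̂ z` the estimator is
`l_{2ε} + ∫_{I_{2ε}} Φ_h(b̂ z - w) dz`, where `Φ_h` is the primitive of `K_h`. As `Φ_h(a - w)`
equals the step `1[w ≤ a]` unless `|a - w| ≤ h`, the error integrand is bounded by the indicator
of `[a - h, a + h]` plus that of the segment between `a = b̂ z` and `b z`. Integrating in `w`
gives `2h + |b̂ z - b z| ≤ 5h/2 + |b̂ z - b z|² / (2h)`, and integrating in `z` and `ω`
(all integrands are bounded, so Fubini applies freely) gives `C (h + R(b̂)/h)`.
-/

open Set

section Kernel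

variable {K : ℝ → ℝ} {h : ℝ}

lemma Kh_nonneg (hK0 : ∀ y, 0 ≤ K y) (hh : 0 ≤ h) (x : ℝ) : 0 ≤ Kh K h x :=
  mul_nonneg (inv_nonneg.2 hh) (hK0 _)

lemma Kh_neg (hKsymm : ∀ y, K (-y) = K y) (x : ℝ) : Kh K h (-x) = Kh K h x := by
  simp only [Kh, neg_div, hKsymm]

lemma Kh_eq_zero_of_lt_abs (hKsupp : ∀ y, 1 < |y| → K y = 0) (hh : 0 < h) {x : ℝ}
    (hx : h < |x|) : Kh K h x = 0 := by
  have : 1 < |x / h| := by rwa [abs_div, abs_of_pos hh, one_lt_div hh]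
  simp [Kh, hKsupp _ this]

lemma continuous_Kh (hK : Continuous K) : Continuous (Kh K h) := by
  unfold Kh; fun_prop

lemma integrable_Kh (hK : Continuous K) (hKsupp : ∀ y, 1 < |y| → K y = 0) (hh : 0 < h) :
    Integrable (Kh K h) := by
  refine (continuous_Kh hK).integrable_of_hasCompactSupport
    (HasCompactSupport.of_support_subset_isCompact (isCompact_Icc (a := -h) (b := h))
      fun x hx => ?_)
  by_contra hx'
  rw [mem_Icc, ← abs_le, not_le] at hx'
  exact hx (Kh_eq_zero_of_lt_abs hKsupp hh hx')

lemma integral_Kh (hKint : ∫ y, K y = 1) (hh : 0 < h) : ∫ x, Kh K h x = 1 := by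
  rw [show Kh K h = fun x => h⁻¹ * K (x / h) from rfl, integral_const_mul,
    Measure.integral_comp_div K h, hKint, abs_of_pos hh, smul_eq_mul,
    mul_one, inv_mul_cancel₀ hh.ne']

end Kernel

/-- `Φ_h(t) = ∫_{-∞}^t K_h`, a smoothing of the Heaviside step `1[0 ≤ t]` at scale `h`. -/
noncomputable def kernelCDF (K : ℝ → ℝ) (h t : ℝ) : ℝ := ∫ x in Iic t, Kh K h x

section KernelCDF

variable {K : ℝ → ℝ} {h : ℝ}

lemma kernelCDF_nonneg (hK0 : ∀ y, 0 ≤ K y) (hh : 0 ≤ h) (t : ℝ) : 0 ≤ kernelCDF K h t :=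
  setIntegral_nonneg measurableSet_Iic fun x _ => Kh_nonneg hK0 hh x

lemma kernelCDF_le_one (hK0 : ∀ y, 0 ≤ K y) (hK : Continuous K)
    (hKsupp : ∀ y, 1 < |y| → K y = 0) (hKint : ∫ y, K y = 1) (hh : 0 < h) (t : ℝ) :
    kernelCDF K h t ≤ 1 :=
  integral_Kh hKint hh ▸ setIntegral_le_integral (integrable_Kh hK hKsupp hh)
    (ae_of_all _ (Kh_nonneg hK0 hh.le))

lemma monotone_kernelCDF (hK0 : ∀ y, 0 ≤ K y) (hK : Continuous K)
    (hKsupp : ∀ y, 1 < |y| → K y = 0) (hh : 0 < h) : Monotone (kernelCDF K h) :=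
  fun _ _ hst => setIntegral_mono_set (integrable_Kh hK hKsupp hh).integrableOn
    (ae_of_all _ (Kh_nonneg hK0 hh.le)) (ae_of_all _ fun _ hx => le_trans hx hst)

lemma kernelCDF_of_le_neg (hKsupp : ∀ y, 1 < |y| → K y = 0) (hh : 0 < h) {t : ℝ}
    (ht : t ≤ -h) : kernelCDF K h t = 0 := by
  rw [kernelCDF, setIntegral_congr_set Iio_ae_eq_Iic.symm]
  refine setIntegral_eq_zero_of_forall_eq_zero fun x (hx : x < t) => ?_
  exact Kh_eq_zero_of_lt_abs hKsupp hh (by rw [abs_of_neg (by linarith)]; linarith)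

lemma kernelCDF_of_le (hK : Continuous K) (hKsupp : ∀ y, 1 < |y| → K y = 0)
    (hKint : ∫ y, K y = 1) (hh : 0 < h) {t : ℝ} (ht : h ≤ t) : kernelCDF K h t = 1 := by
  have hint := integrable_Kh hK hKsupp hh
  have htail : ∫ x in Ioi t, Kh K h x = 0 :=
    setIntegral_eq_zero_of_forall_eq_zero fun x (hx : t < x) =>
      Kh_eq_zero_of_lt_abs hKsupp hh ((ht.trans_lt hx).trans_le (le_abs_self x))
  have := intervalIntegral.integral_Iic_add_Ioi (b := t) hint.integrableOn hint.integrableOn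
  rwa [integral_Kh hKint hh, htail, add_zero] at this

lemma setIntegral_Iic_Kh_neg_sub (hKsymm : ∀ y, K (-y) = K y) (a w : ℝ) :
    ∫ y in Iic (-w), Kh K h (-a - y) = kernelCDF K h (a - w) := by
  have hpre : (· + a) ⁻¹' Iic (a - w) = Iic (-w) := by
    ext y; simp only [mem_preimage, mem_Iic]; constructor <;> intro <;> linarith
  have := (measurePreserving_add_right volume a).setIntegral_preimage_emb
    (measurableEmbedding_addRight a) (Kh K h) (Iic (a - w))
  rw [hpre] at this
  rw [kernelCDF, ← this]
  congr 1 with y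
  rw [← Kh_neg hKsymm, neg_sub_left, neg_neg, add_comm]

lemma binvEst_eq (hKsymm : ∀ y, K (-y) = K y) (l₀ r₀ ε : ℝ) (g : ℝ → ℝ) (w : ℝ) :
    binvEst K l₀ r₀ ε h g w =
      l₀ - 2 * ε + ∫ z in Icc (l₀ - 2 * ε) (r₀ + 2 * ε), kernelCDF K h (g z - w) := by
  simp only [binvEst, setIntegral_Iic_Kh_neg_sub hKsymm]

end KernelCDF

noncomputable def stepErrorBound (h a c w : ℝ) : ℝ :=
  (Icc (a - h) (a + h)).indicator 1 w + (uIcc a c).indicator 1 w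

section StepErrorBound

variable {h : ℝ}

lemma abs_indicator_Iic_sub_indicator_Iic_le (a c w : ℝ) :
    |(Iic a).indicator (1 : ℝ → ℝ) w - (Iic c).indicator 1 w| ≤ (uIcc a c).indicator 1 w := by
  classical
  by_cases ha : w ≤ a <;> by_cases hc : w ≤ c <;>
    simp [ha, hc, indicator_apply, mem_uIcc] <;> grind

lemma abs_sub_indicator_Iic_le {Φ : ℝ → ℝ} (hΦ0 : ∀ t ≤ -h, Φ t = 0)
    (hΦ1 : ∀ t, h ≤ t → Φ t = 1) (hΦ : ∀ t, Φ t ∈ Icc 0 1) (hh : 0 ≤ h) (a c w : ℝ) :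
    |Φ (a - w) - (Iic c).indicator 1 w| ≤ stepErrorBound h a c w := by
  have hI : (Iic c).indicator (1 : ℝ → ℝ) w ∈ Icc 0 1 := by
    by_cases hw : w ≤ c <;> simp [hw]
  rcases le_or_gt |a - w| h with hnear | hfar
  · have hwin : (Icc (a - h) (a + h)).indicator (1 : ℝ → ℝ) w = 1 := by
      rw [abs_le] at hnear
      exact indicator_of_mem (show w ∈ Icc (a - h) (a + h) from ⟨by linarith, by linarith⟩) _
    have hrest : 0 ≤ (uIcc a c).indicator (1 : ℝ → ℝ) w := indicator_nonneg (by simp) _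
    rw [stepErrorBound, hwin, abs_le]
    constructor <;> linarith [(hΦ (a - w)).1, (hΦ (a - w)).2, hI.1, hI.2]
  · have hstep : Φ (a - w) = (Iic a).indicator 1 w := by
      rcases lt_abs.1 hfar with hfar | hfar
      · rw [hΦ1 _ hfar.le, indicator_of_mem (by simp only [mem_Iic]; linarith), Pi.one_apply]
      · rw [hΦ0 _ (by linarith), indicator_of_notMem (by simp only [mem_Iic]; linarith)]
    rw [hstep, stepErrorBound]
    exact (abs_indicator_Iic_sub_indicator_Iic_le a c w).trans
      (le_add_of_nonneg_left (indicator_nonneg (by simp) _))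

lemma measurable_stepErrorBound (h : ℝ) :
    Measurable fun p : ℝ × ℝ × ℝ => stepErrorBound h p.1 p.2.1 p.2.2 := by
  classical
  simp only [stepErrorBound, indicator_apply]
  refine Measurable.add (Measurable.ite ?_ measurable_const measurable_const)
    (Measurable.ite ?_ measurable_const measurable_const)
  · exact (measurableSet_le (f := fun p : ℝ × ℝ × ℝ => p.1 - h) (by fun_prop) (by fun_prop)).inter
      (measurableSet_le (g := fun p : ℝ × ℝ × ℝ => p.1 + h) (by fun_prop) (by fun_prop))
  · exact (measurableSet_le (f := fun p : ℝ × ℝ × ℝ => min p.1 p.2.1) (by fun_prop)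
      (by fun_prop)).inter
      (measurableSet_le (g := fun p : ℝ × ℝ × ℝ => max p.1 p.2.1) (by fun_prop) (by fun_prop))

lemma stepErrorBound_nonneg (h a c w : ℝ) : 0 ≤ stepErrorBound h a c w := by
  unfold stepErrorBound
  exact add_nonneg (indicator_nonneg (by simp) _) (indicator_nonneg (by simp) _)

lemma norm_stepErrorBound_le (h a c w : ℝ) : ‖stepErrorBound h a c w‖ ≤ 2 := by
  rw [Real.norm_of_nonneg (stepErrorBound_nonneg h a c w), stepErrorBound, ← one_add_one_eq_two]
  gcongr <;> exact indicator_le_self' (fun _ _ => zero_le_one) _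

lemma setIntegral_indicator_one_le {α : Type*} [MeasurableSpace α] {μ : Measure α} {s : Set α}
    (hs : MeasurableSet s) (hμs : μ s ≠ ⊤) (t : Set α) :
    ∫ x in t, s.indicator 1 x ∂μ ≤ μ.real s := by
  rw [integral_indicator_one hs, measureReal_restrict_apply hs]
  exact measureReal_mono inter_subset_left hμs

lemma setIntegral_stepErrorBound_le (hh : 0 ≤ h) (J : Set ℝ) (a c : ℝ) :
    ∫ w in J, stepErrorBound h a c w ≤ 2 * h + |a - c| := by
  have hint {s : Set ℝ} (hs : MeasurableSet s) (hμs : volume s ≠ ⊤) :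
      IntegrableOn (s.indicator 1) J :=
    ((integrable_indicator_iff hs).2 (integrableOn_const hμs (C := (1 : ℝ)))).integrableOn
  have hwin := setIntegral_indicator_one_le (μ := volume)
    (measurableSet_Icc (a := a - h) (b := a + h)) measure_Icc_lt_top.ne J
  have hbetween := setIntegral_indicator_one_le (μ := volume)
    (measurableSet_uIcc (a := a) (b := c)) measure_Icc_lt_top.ne J
  rw [Real.volume_real_Icc, max_eq_left (by linarith)] at hwin
  rw [Real.volume_real_interval, abs_sub_comm] at hbetween
  simp only [stepErrorBound]
  rw [integral_add (hint measurableSet_Icc measure_Icc_lt_top.ne)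
    (hint measurableSet_uIcc measure_Icc_lt_top.ne)]
  linarith

lemma le_half_add_sq_div (hh : 0 < h) (x : ℝ) : x ≤ h / 2 + x ^ 2 / (2 * h) := by
  rw [div_add_div _ _ two_ne_zero (by positivity), le_div_iff₀ (by positivity)]
  nlinarith [sq_nonneg (x - h)]

lemma integral_setIntegral_stepErrorBound_le {Ω : Type*} [MeasurableSpace Ω] {P : Measure Ω}
    [IsProbabilityMeasure P] (hh : 0 < h) {a : Ω → ℝ} {c : ℝ}
    (ha : Integrable (fun ω => |a ω - c| ^ 2) P) (J : Set ℝ) :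
    ∫ ω, (∫ w in J, stepErrorBound h (a ω) c w) ∂P ≤
      5 * h / 2 + (∫ ω, |a ω - c| ^ 2 ∂P) / (2 * h) := by
  have hpointwise (ω : Ω) :
      ∫ w in J, stepErrorBound h (a ω) c w ≤ 5 * h / 2 + |a ω - c| ^ 2 / (2 * h) := by
    linarith [setIntegral_stepErrorBound_le hh.le J (a ω) c, le_half_add_sq_div hh |a ω - c|]
  calc ∫ ω, (∫ w in J, stepErrorBound h (a ω) c w) ∂P
      ≤ ∫ ω, (5 * h / 2 + |a ω - c| ^ 2 / (2 * h)) ∂P :=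
        integral_mono_of_nonneg
          (ae_of_all _ fun ω => integral_nonneg fun w => stepErrorBound_nonneg h _ c w)
          ((integrable_const _).add (ha.div_const _)) (ae_of_all _ hpointwise)
    _ = 5 * h / 2 + (∫ ω, |a ω - c| ^ 2 ∂P) / (2 * h) := by
        rw [integral_add (integrable_const _) (ha.div_const _), integral_const, integral_div,
          probReal_univ, one_smul]

lemma setIntegral_integral_setIntegral_stepErrorBound_le {Ω : Type*} [MeasurableSpace Ω]
    {P : Measure Ω} [IsProbabilityMeasure P] {h : ℝ} (hh : 0 < h) {s : Set ℝ}
    (hs : MeasurableSet s) (hsfin : volume s ≠ ⊤) {a : Ω → ℝ → ℝ} {b c : ℝ → ℝ} (hcb : EqOn c b s)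
    (ha : ∀ z ∈ s, Integrable (fun ω => |a ω z - b z| ^ 2) P)
    (ha' : IntegrableOn (fun z => ∫ ω, |a ω z - b z| ^ 2 ∂P) s) (J : Set ℝ) :
    ∫ z in s, ∫ ω, (∫ w in J, stepErrorBound h (a ω z) (c z) w) ∂P ≤
      5 * h / 2 * volume.real s + (∫ z in s, ∫ ω, |a ω z - b z| ^ 2 ∂P) / (2 * h) := by
  have hconst : IntegrableOn (fun _ => 5 * h / 2) s := integrableOn_const hsfin
  calc ∫ z in s, ∫ ω, (∫ w in J, stepErrorBound h (a ω z) (c z) w) ∂P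
      ≤ ∫ z in s, (5 * h / 2 + (∫ ω, |a ω z - b z| ^ 2 ∂P) / (2 * h)) :=
        integral_mono_of_nonneg
          (ae_of_all _ fun z => integral_nonneg fun ω =>
            integral_nonneg fun w => stepErrorBound_nonneg _ _ _ _)
          (hconst.add (ha'.div_const _))
          ((ae_restrict_iff' hs).2 (ae_of_all _ fun z hz => by
            simpa only [hcb hz] using integral_setIntegral_stepErrorBound_le hh (ha z hz) J))
    _ = 5 * h / 2 * volume.real s + (∫ z in s, ∫ ω, |a ω z - b z| ^ 2 ∂P) / (2 * h) := by
        rw [integral_add hconst (ha'.div_const _), setIntegral_const,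
          integral_div, smul_eq_mul, mul_comm]

end StepErrorBound

lemma StrictAntiOn.Icc_inter_setOf_apply_le {α β : Type*} [LinearOrder α] [Preorder β]
    {f : α → β} {s t x : α} (hf : StrictAntiOn f (Icc s t)) (hx : x ∈ Icc s t) :
    Icc s t ∩ {z | f x ≤ f z} = Icc s x := by
  ext z
  constructor
  · rintro ⟨hz, hfz⟩
    exact ⟨hz.1, (hf.le_iff_ge hx hz).1 hfz⟩
  · rintro ⟨hsz, hzx⟩
    have hz : z ∈ Icc s t := ⟨hsz, hzx.trans hx.2⟩
    exact ⟨hz, (hf.le_iff_ge hx hz).2 hzx⟩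

lemma abs_binvEst_sub_le {K b binv c g : ℝ → ℝ} {l₀ r₀ ε h : ℝ}
    (hK0 : ∀ y, 0 ≤ K y) (hK : Continuous K) (hKsymm : ∀ y, K (-y) = K y)
    (hKsupp : ∀ y, 1 < |y| → K y = 0) (hKint : ∫ y, K y = 1) (hh : 0 < h)
    (hlr : l₀ ≤ r₀) (hε : 0 ≤ ε)
    (hb : StrictAntiOn b (Icc (l₀ - 2 * ε) (r₀ + 2 * ε)))
    (hbc : ContinuousOn b (Icc (l₀ - 2 * ε) (r₀ + 2 * ε)))
    (hbinv : ∀ x ∈ Icc (l₀ - 2 * ε) (r₀ + 2 * ε), binv (b x) = x)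
    (hc : Measurable c) (hcb : EqOn c b (Icc (l₀ - 2 * ε) (r₀ + 2 * ε))) (hg : Measurable g)
    {w : ℝ} (hw : w ∈ Icc (b (r₀ + ε)) (b (l₀ - ε))) :
    |binvEst K l₀ r₀ ε h g w - binv w| ≤
      ∫ z in Icc (l₀ - 2 * ε) (r₀ + 2 * ε), stepErrorBound h (g z) (c z) w := by
  set I := Icc (l₀ - 2 * ε) (r₀ + 2 * ε)
  have hIε : Icc (l₀ - ε) (r₀ + ε) ⊆ I := Icc_subset_Icc (by linarith) (by linarith)
  obtain ⟨x, hxε, rfl⟩ := intermediate_value_Icc' (by linarith) (hbc.mono hIε) hw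
  have hx := hIε hxε
  have hlevel : ∫ z in I, (Iic (c z)).indicator (1 : ℝ → ℝ) (b x) = x - (l₀ - 2 * ε) := by
    have hset : I ∩ c ⁻¹' Ici (b x) = Icc (l₀ - 2 * ε) x := by
      rw [hcb.inter_preimage_eq]
      exact hb.Icc_inter_setOf_apply_le hx
    change ∫ z in I, (c ⁻¹' Ici (b x)).indicator 1 z = _
    rw [integral_indicator_one (measurableSet_Ici.preimage hc), measureReal_restrict_apply
      (measurableSet_Ici.preimage hc), inter_comm, hset, Real.volume_real_Icc,
      max_eq_left (by linarith [hx.1])]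
  have hΦint : IntegrableOn (fun z => kernelCDF K h (g z - b x)) I :=
    Integrable.of_bound ((monotone_kernelCDF hK0 hK hKsupp hh).measurable.comp
      (hg.sub measurable_const)).aestronglyMeasurable 1 (ae_of_all _ fun z => by
        rw [Real.norm_of_nonneg (kernelCDF_nonneg hK0 hh.le _)]
        exact kernelCDF_le_one hK0 hK hKsupp hKint hh _)
  have hindint : IntegrableOn (fun z => (Iic (c z)).indicator (1 : ℝ → ℝ) (b x)) I :=
    (integrable_const (1 : ℝ)).indicator (measurableSet_Ici.preimage hc)
  have hboundint : IntegrableOn (fun z => stepErrorBound h (g z) (c z) (b x)) I :=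
    Integrable.of_bound ((measurable_stepErrorBound h).comp
      (hg.prodMk (hc.prodMk measurable_const))).aestronglyMeasurable 2
      (ae_of_all _ fun z => norm_stepErrorBound_le h _ _ _)
  have herr : binvEst K l₀ r₀ ε h g (b x) - binv (b x) =
      ∫ z in I, (kernelCDF K h (g z - b x) - (Iic (c z)).indicator 1 (b x)) := by
    rw [binvEst_eq hKsymm, hbinv x hx, integral_sub hΦint hindint, hlevel]
    ring
  rw [herr]
  refine abs_integral_le_integral_abs.trans (integral_mono_of_nonneg
    (ae_of_all _ fun _ => abs_nonneg _) hboundint (ae_of_all _ fun z => ?_))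
  exact abs_sub_indicator_Iic_le (fun _ => kernelCDF_of_le_neg hKsupp hh)
    (fun _ => kernelCDF_of_le hK hKsupp hKint hh)
    (fun t => ⟨kernelCDF_nonneg hK0 hh.le t, kernelCDF_le_one hK0 hK hKsupp hKint hh t⟩) hh.le _ _ _

lemma ContinuousOn.exists_continuous_eqOn_Icc {α β : Type*} [LinearOrder α] [TopologicalSpace α]
    [OrderTopology α] [TopologicalSpace β] {f : α → β} {a b : α} (hab : a ≤ b)
    (hf : ContinuousOn f (Icc a b)) : ∃ g : α → β, Continuous g ∧ EqOn g f (Icc a b) :=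
  ⟨fun z => f (projIcc a b hab z),
    hf.comp_continuous (continuous_subtype_val.comp continuous_projIcc) fun z =>
      (projIcc a b hab z).2,
    fun z hz => by simp [projIcc_of_mem hab hz]⟩

section IteratedIntegrals

variable {Ω β γ E : Type*} [MeasurableSpace Ω] [MeasurableSpace β] [MeasurableSpace γ]
  [NormedAddCommGroup E] [NormedSpace ℝ E]

lemma integrable_integral_of_norm_le {μ : Measure β} {ν : Measure γ} [IsFiniteMeasure μ]
    [IsFiniteMeasure ν] {f : β → γ → E} (hf : StronglyMeasurable (Function.uncurry f)) {C : ℝ}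
    (hC : ∀ x y, ‖f x y‖ ≤ C) : Integrable (fun x => ∫ y, f x y ∂ν) μ :=
  Integrable.of_bound hf.integral_prod_right'.aestronglyMeasurable (C * ν.real univ)
    (ae_of_all _ fun x => norm_integral_le_of_norm_le_const (ae_of_all _ (hC x)))

lemma integral_integral_swap_of_norm_le {μ : Measure β} {ν : Measure γ} [IsFiniteMeasure μ]
    [IsFiniteMeasure ν] {f : β → γ → E} (hf : StronglyMeasurable (Function.uncurry f)) {C : ℝ}
    (hC : ∀ x y, ‖f x y‖ ≤ C) : ∫ x, ∫ y, f x y ∂ν ∂μ = ∫ y, ∫ x, f x y ∂μ ∂ν :=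
  integral_integral_swap
    (Integrable.of_bound hf.aestronglyMeasurable C (ae_of_all _ fun p => hC p.1 p.2))

variable {P : Measure Ω} {μ : Measure β} {ν : Measure γ} [IsFiniteMeasure P] [IsFiniteMeasure μ]
  [IsFiniteMeasure ν]

lemma integral_integral_integral_comm {F : Ω → β → γ → E}
    (hF : StronglyMeasurable fun p : Ω × β × γ => F p.1 p.2.1 p.2.2) {C : ℝ}
    (hC : ∀ ω z w, ‖F ω z w‖ ≤ C) :
    ∫ w, ∫ ω, (∫ z, F ω z w ∂μ) ∂P ∂ν = ∫ z, ∫ ω, (∫ w, F ω z w ∂ν) ∂P ∂μ :=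
  calc ∫ w, ∫ ω, (∫ z, F ω z w ∂μ) ∂P ∂ν = ∫ w, ∫ z, (∫ ω, F ω z w ∂P) ∂μ ∂ν := by
        congr 1 with w
        exact integral_integral_swap_of_norm_le
          (hF.comp_measurable (g := fun p : Ω × β => (p.1, p.2, w)) (by fun_prop))
          fun ω z => hC ω z w
    _ = ∫ z, ∫ w, (∫ ω, F ω z w ∂P) ∂ν ∂μ :=
        integral_integral_swap_of_norm_le (f := fun w z => ∫ ω, F ω z w ∂P)
          (hF.comp_measurable (g := fun p : (γ × β) × Ω => (p.2, p.1.2, p.1.1))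
            (by fun_prop)).integral_prod_right'
          fun w z => norm_integral_le_of_norm_le_const (ae_of_all _ fun ω => hC ω z w)
    _ = ∫ z, ∫ ω, (∫ w, F ω z w ∂ν) ∂P ∂μ := by
        congr 1 with z
        exact integral_integral_swap_of_norm_le (f := fun w ω => F ω z w)
          (hF.comp_measurable (g := fun p : γ × Ω => (p.2, z, p.1)) (by fun_prop))
          fun w ω => hC ω z w

lemma integral_integral_le_integral_integral_integral {F : Ω → β → γ → ℝ}
    (hF : StronglyMeasurable fun p : Ω × β × γ => F p.1 p.2.1 p.2.2) {C : ℝ}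
    (hC : ∀ ω z w, ‖F ω z w‖ ≤ C) {G : γ → Ω → ℝ} (hG0 : ∀ w ω, 0 ≤ G w ω)
    (hGF : ∀ᵐ w ∂ν, ∀ ω, G w ω ≤ ∫ z, F ω z w ∂μ) :
    ∫ w, ∫ ω, G w ω ∂P ∂ν ≤ ∫ z, ∫ ω, (∫ w, F ω z w ∂ν) ∂P ∂μ := by
  refine (integral_mono_of_nonneg (ae_of_all _ fun w => integral_nonneg (hG0 w))
    (integrable_integral_of_norm_le (f := fun w ω => ∫ z, F ω z w ∂μ)
      (hF.comp_measurable (g := fun p : (γ × Ω) × β => (p.1.2, p.2, p.1.1))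
        (by fun_prop)).integral_prod_right'
      fun w ω => norm_integral_le_of_norm_le_const (ae_of_all _ fun z => hC ω z w))
    (hGF.mono fun w hw => integral_mono_of_nonneg (ae_of_all _ (hG0 w))
      (integrable_integral_of_norm_le (f := fun ω z => F ω z w)
        (hF.comp_measurable (g := fun p : Ω × β => (p.1, p.2, w)) (by fun_prop))
        fun ω z => hC ω z w)
      (ae_of_all _ hw))).trans_eq ?_
  exact integral_integral_integral_comm hF hC

end IteratedIntegrals

theorem stmt0_general (l₀ r₀ ε mb : ℝ) (K b b' binv : ℝ → ℝ)
    (hlr : l₀ < r₀) (hε : 0 < ε) (hmb : 0 < mb)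
    -- kernel assumptions
    (hK0 : ∀ y, 0 ≤ K y) (hK2 : ContDiff ℝ 2 K) (hKsymm : ∀ y, K (-y) = K y)
    (hKsupp : ∀ y, 1 < |y| → K y = 0) (hKint : ∫ y, K y = 1)
    -- `b` is continuously differentiable on `I_{2ε}` with `b' ≤ -mb` there
    (hbd : ∀ x ∈ Set.Icc (l₀ - 2 * ε) (r₀ + 2 * ε), HasDerivAt b (b' x) x)
    (hb'le : ∀ x ∈ Set.Icc (l₀ - 2 * ε) (r₀ + 2 * ε), b' x ≤ -mb)
    -- `binv` is the inverse of `b` on `I_{2ε}`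
    (hbinv : ∀ x ∈ Set.Icc (l₀ - 2 * ε) (r₀ + 2 * ε), binv (b x) = x) :
    ∃ C > 0, ∀ (Ω : Type) [MeasurableSpace Ω] (P : Measure Ω) [IsProbabilityMeasure P]
      (bhat : Ω → ℝ → ℝ), Measurable (Function.uncurry bhat) →
      (∀ x ∈ Set.Icc (l₀ - 2 * ε) (r₀ + 2 * ε),
        Integrable (fun ω => |bhat ω x - b x| ^ 2) P) →
      IntegrableOn (fun x => ∫ ω, |bhat ω x - b x| ^ 2 ∂P)
        (Set.Icc (l₀ - 2 * ε) (r₀ + 2 * ε)) →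
      ∀ h : ℝ, 0 < h → h < mb * ε →
      (∫ w in Set.Icc (b (r₀ + ε)) (b (l₀ - ε)),
          ∫ ω, |binvEst K l₀ r₀ ε h (bhat ω) w - binv w| ∂P) ≤
        C * (h +
          Real.sqrt (∫ x in Set.Icc (l₀ - 2 * ε) (r₀ + 2 * ε),
            ∫ ω, |bhat ω x - b x| ^ 2 ∂P) +
          (∫ x in Set.Icc (l₀ - 2 * ε) (r₀ + 2 * ε),
            ∫ ω, |bhat ω x - b x| ^ 2 ∂P) / h) := by
  set I := Icc (l₀ - 2 * ε) (r₀ + 2 * ε)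
  have hbc : ContinuousOn b I := fun x hx => (hbd x hx).continuousAt.continuousWithinAt
  have hb : StrictAntiOn b I := strictAntiOn_of_deriv_neg (convex_Icc _ _) hbc fun x hx => by
    rw [(hbd x (interior_subset hx)).deriv]
    linarith [hb'le x (interior_subset hx)]
  obtain ⟨c, hc, hcb⟩ := hbc.exists_continuous_eqOn_Icc (by linarith)
  refine ⟨5 / 2 * volume.real I + 1 / 2, by positivity,
    fun Ω _ P _ bhat hmeas hint hintI h hh _ => ?_⟩
  set R := ∫ x in I, ∫ ω, |bhat ω x - b x| ^ 2 ∂P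
  have hF : Measurable fun p : Ω × ℝ × ℝ => stepErrorBound h (bhat p.1 p.2.1) (c p.2.1) p.2.2 :=
    (measurable_stepErrorBound h).comp
      ((hmeas.comp (measurable_fst.prodMk measurable_snd.fst)).prodMk
        ((hc.measurable.comp measurable_snd.fst).prodMk measurable_snd.snd))
  calc _ ≤ ∫ z in I, ∫ ω, (∫ w in Icc (b (r₀ + ε)) (b (l₀ - ε)),
          stepErrorBound h (bhat ω z) (c z) w) ∂P :=
        integral_integral_le_integral_integral_integral hF.stronglyMeasurable
          (fun _ _ _ => norm_stepErrorBound_le _ _ _ _) (fun _ _ => abs_nonneg _)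
          ((ae_restrict_iff' measurableSet_Icc).2 (ae_of_all _ fun w hw ω =>
            abs_binvEst_sub_le hK0 hK2.continuous hKsymm hKsupp hKint hh hlr.le hε.le hb hbc
              hbinv hc.measurable hcb hmeas.of_uncurry_left hw))
    _ ≤ 5 * h / 2 * volume.real I + R / (2 * h) :=
        setIntegral_integral_setIntegral_stepErrorBound_le hh measurableSet_Icc
          measure_Icc_lt_top.ne hcb hint hintI _
    _ ≤ _ := by
        have hR : 0 ≤ R := setIntegral_nonneg measurableSet_Icc fun _ _ =>
          integral_nonneg fun _ => by positivity
        have hRh : R / (2 * h) = R / h / 2 := by rw [div_div, mul_comm]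
        nlinarith [measureReal_nonneg (μ := volume) (s := I), Real.sqrt_nonneg R,
          div_nonneg hR hh.le]

/-- Proposition 2.1: `L¹`-risk bound for the inverse estimator `𝔟̂_h⁻¹`. -/
theorem stmt0 (l₀ r₀ ε mb : ℝ) (K b b' binv : ℝ → ℝ)
    (hlr : l₀ < r₀) (hε : 0 < ε) (hε1 : ε ≤ 1) (hmb : 0 < mb)
    -- kernel assumptions
    (hK0 : ∀ y, 0 ≤ K y) (hK2 : ContDiff ℝ 2 K) (hKsymm : ∀ y, K (-y) = K y)
    (hKsupp : ∀ y, 1 < |y| → K y = 0) (hKint : ∫ y, K y = 1)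
    -- `b` is continuously differentiable on `I_{2ε}` with `b' ≤ -mb` there
    (hbd : ∀ x ∈ Set.Icc (l₀ - 2 * ε) (r₀ + 2 * ε), HasDerivAt b (b' x) x)
    (hb'c : ContinuousOn b' (Set.Icc (l₀ - 2 * ε) (r₀ + 2 * ε)))
    (hb'le : ∀ x ∈ Set.Icc (l₀ - 2 * ε) (r₀ + 2 * ε), b' x ≤ -mb)
    -- `binv` is the inverse of `b` on `I_{2ε}`
    (hbinv : ∀ x ∈ Set.Icc (l₀ - 2 * ε) (r₀ + 2 * ε), binv (b x) = x) :
    ∃ C > 0, ∀ (Ω : Type) [MeasurableSpace Ω] (P : Measure Ω) [IsProbabilityMeasure P]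
      (bhat : Ω → ℝ → ℝ), Measurable (Function.uncurry bhat) →
      (∀ x ∈ Set.Icc (l₀ - 2 * ε) (r₀ + 2 * ε),
        Integrable (fun ω => |bhat ω x - b x| ^ 2) P) →
      IntegrableOn (fun x => ∫ ω, |bhat ω x - b x| ^ 2 ∂P)
        (Set.Icc (l₀ - 2 * ε) (r₀ + 2 * ε)) →
      ∀ h : ℝ, 0 < h → h < mb * ε →
      (∫ w in Set.Icc (b (r₀ + ε)) (b (l₀ - ε)),
          ∫ ω, |binvEst K l₀ r₀ ε h (bhat ω) w - binv w| ∂P) ≤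
        C * (h +
          Real.sqrt (∫ x in Set.Icc (l₀ - 2 * ε) (r₀ + 2 * ε),
            ∫ ω, |bhat ω x - b x| ^ 2 ∂P) +
          (∫ x in Set.Icc (l₀ - 2 * ε) (r₀ + 2 * ε),
            ∫ ω, |bhat ω x - b x| ^ 2 ∂P) / h) :=
  stmt0_general l₀ r₀ ε mb K b b' binv hlr hε hmb hK0 hK2 hKsymm hKsupp hKint hbd hb'le hbinv
end

section
/- Under the stated assumptions, for any measurable selection (ℓ̃, h̃) of a minimizer over 𝔥_b² of (ℓ, h) ↦ ∫_{I₀} |b̃_{ℓ,h}(x) − b̂(x)| dx, one has ∫_{I₀} E(|b̃_{ℓ̃,h̃}(x) − b(x)|) dx ≤ min_{(ℓ,h)∈𝔥_b²} { ∫_{I₀} E(|b̃_{ℓ,h}(x) − b(x)|) dx } + 2 (r₀ − l₀)^{1/2} R(b̂)^{1/2}. -/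
open MeasureTheory

/-- The strictly decreasing estimator
`lo + ∫_{lo}^{hi} ∫_{-∞}^{-x} K_ℓ(-𝔟̂_h⁻¹(z) - y) dy dz`. -/
noncomputable def monoEst (K : ℝ → ℝ) (l₀ r₀ ε ℓ h lo hi : ℝ) (g : ℝ → ℝ) (x : ℝ) : ℝ :=
  lo + ∫ z in lo..hi, ∫ y in Set.Iic (-x), Kh K ℓ (-(binvEst K l₀ r₀ ε h g z) - y)

/-- The practical estimator `b̃_{ℓ,h}`, with data-driven endpoints and the indicator of
the event `Ω_{b̂} = {b̂(r_ε) - b̂(l_ε) ≤ -(m_b/2)(r_ε - l_ε)}`. -/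
noncomputable def pracEst (K : ℝ → ℝ) (l₀ r₀ ε mb ℓ h : ℝ) (bhat : α → ℝ → ℝ)
    (x : ℝ) (ω : α) : ℝ :=
  Set.indicator
    {ω' : α | bhat ω' (r₀ + ε) - bhat ω' (l₀ - ε) ≤ -(mb / 2) * ((r₀ + ε) - (l₀ - ε))}
    (fun ω' => monoEst K l₀ r₀ ε ℓ h (bhat ω' (r₀ + ε)) (bhat ω' (l₀ - ε)) (bhat ω') x) ω

/-!
For every `ω` the selection rule gives `‖b̃_{ℓ̃,h̃} - b̂‖ ≤ ‖b̃_{ℓ,h} - b̂‖` in `L¹(I₀)`, so two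
triangle inequalities give `‖b̃_{ℓ̃,h̃} - b‖ ≤ ‖b̃_{ℓ,h} - b‖ + 2 ‖b̂ - b‖`. Integrating in `ω`
and applying Cauchy–Schwarz on `I₀ × Ω` bounds `E ∫_{I₀} |b̂ - b|` by
`(r₀ - l₀)^{1/2} (∫_{I₀} E |b̂ - b|²)^{1/2}`. All that is needed about the estimators is that they
are jointly measurable and dominated: every inner integral of `K_ℓ` is bounded by `‖K‖₁`, so
`|b̃_{ℓ,h}| ≤ |b̂(r_ε)| + ‖K‖₁ |b̂(l_ε) - b̂(r_ε)|`, an integrable function of `ω`.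
-/

section General

variable {α β : Type*} [MeasurableSpace α] [MeasurableSpace β]

theorem measurable_setIntegral_of_measurableSet_prod {ν : Measure β} [SFinite ν]
    {f : α → β → ℝ} {t : α → Set β} (hf : Measurable (Function.uncurry f))
    (ht : MeasurableSet {p : α × β | p.2 ∈ t p.1}) :
    Measurable fun a => ∫ y in t a, f a y ∂ν := by
  have hind : ∀ a, ∫ y in t a, f a y ∂ν
      = ∫ y, Set.indicator {p : α × β | p.2 ∈ t p.1} (Function.uncurry f) (a, y) ∂ν := by
    intro a
    have hta : MeasurableSet (t a) := measurable_prodMk_left ht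
    rw [← integral_indicator hta]
    rfl
  simp_rw [hind]
  exact ((hf.indicator ht).stronglyMeasurable.integral_prod_right' (ν := ν)).measurable

theorem measurable_intervalIntegral_of_measurable {f : α → ℝ → ℝ} {a b : α → ℝ}
    (hf : Measurable (Function.uncurry f)) (ha : Measurable a) (hb : Measurable b) :
    Measurable fun p => ∫ z in a p..b p, f p z := by
  have hIoc : ∀ {a b : α → ℝ}, Measurable a → Measurable b →
      Measurable fun p => ∫ z in Set.Ioc (a p) (b p), f p z := fun ha hb =>
    measurable_setIntegral_of_measurableSet_prod hf
      ((measurableSet_lt (ha.comp measurable_fst) measurable_snd).inter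
        (measurableSet_le measurable_snd (hb.comp measurable_fst)))
  exact (hIoc ha hb).sub (hIoc hb ha)

theorem measurable_select_of_mem_finset {ι γ : Type*} [MeasurableSpace ι]
    [MeasurableSingletonClass ι] {F : ι → α → γ} [MeasurableSpace γ] {s : Finset ι} {σ : α → ι}
    (hσ : Measurable σ) (hσs : ∀ a, σ a ∈ s) (hF : ∀ i ∈ s, Measurable (F i)) :
    Measurable fun a => F (σ a) a := by
  have hG : Measurable fun p : α × s => F p.2 p.1 :=
    measurable_from_prod_countable_left fun i => hF i i.2
  exact hG.comp (measurable_id.prodMk (hσ.subtype_mk (h := hσs)))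

theorem integral_abs_le_sqrt_measureReal_mul_sqrt {μ : Measure α} [IsFiniteMeasure μ]
    {f : α → ℝ} (hf : MemLp f 2 μ) :
    ∫ a, |f a| ∂μ ≤ √(μ.real Set.univ) * √(∫ a, f a ^ 2 ∂μ) := by
  have h := integral_mul_norm_le_Lp_mul_Lq (μ := μ) Real.HolderConjugate.two_two
    (by simpa using hf) (by simpa using memLp_const (μ := μ) (p := 2) (1 : ℝ))
  simp only [norm_one, mul_one, integral_const, smul_eq_mul, Real.norm_eq_abs] at h
  rw [mul_comm, Real.sqrt_eq_rpow, Real.sqrt_eq_rpow]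
  simpa [one_div] using h

theorem integrable_of_integrable_sq_sub_const {μ : Measure α} [IsFiniteMeasure μ] {X : α → ℝ}
    (hX : AEStronglyMeasurable X μ) (c : ℝ) (h : Integrable (fun a => (X a - c) ^ 2) μ) :
    Integrable X μ :=
  ((((memLp_two_iff_integrable_sq (hX.sub aestronglyMeasurable_const)).2 h).integrable
    one_le_two).add (integrable_const c)).congr (.of_forall fun _ => sub_add_cancel _ _)

theorem memLp_two_prod_of_integrable_sq {ν : Measure α} {P : Measure β} [SFinite ν] [SFinite P]
    {Z : α → β → ℝ} (hZ : AEStronglyMeasurable (fun q : α × β => Z q.1 q.2) (ν.prod P))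
    (hsec : ∀ᵐ x ∂ν, Integrable (fun ω => Z x ω ^ 2) P)
    (hint : Integrable (fun x => ∫ ω, Z x ω ^ 2 ∂P) ν) :
    MemLp (fun q : α × β => Z q.1 q.2) 2 (ν.prod P) :=
  (memLp_two_iff_integrable_sq hZ).2 <| (integrable_prod_iff (hZ.pow 2)).2
    ⟨hsec, by simpa only [Pi.pow_apply, norm_pow, Real.norm_eq_abs, sq_abs] using hint⟩

theorem integral_integral_abs_le_sqrt_mul_sqrt {ν : Measure α} {P : Measure β}
    [IsFiniteMeasure ν] [IsProbabilityMeasure P] {Z : α → β → ℝ}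
    (hZ : MemLp (fun q : α × β => Z q.1 q.2) 2 (ν.prod P)) :
    ∫ x, ∫ ω, |Z x ω| ∂P ∂ν ≤ √(ν.real Set.univ) * √(∫ x, ∫ ω, Z x ω ^ 2 ∂P ∂ν) := by
  rw [← integral_prod _ (hZ.integrable one_le_two).abs, ← integral_prod _ hZ.integrable_sq]
  simpa [← Set.univ_prod_univ, measureReal_prod_prod] using
    integral_abs_le_sqrt_measureReal_mul_sqrt hZ

theorem integral_integral_abs_sub_le_of_forall_le {ν : Measure α} {P : Measure β}
    [SFinite ν] [SFinite P] {u v g : α → β → ℝ} {f : α → ℝ}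
    (hu : Integrable (fun q : α × β => u q.1 q.2 - f q.1) (ν.prod P))
    (hv : Integrable (fun q : α × β => v q.1 q.2 - f q.1) (ν.prod P))
    (hg : Integrable (fun q : α × β => g q.1 q.2 - f q.1) (ν.prod P))
    (hsel : ∀ ω, ∫ x, |u x ω - g x ω| ∂ν ≤ ∫ x, |v x ω - g x ω| ∂ν) :
    ∫ x, ∫ ω, |u x ω - f x| ∂P ∂ν ≤
      ∫ x, ∫ ω, |v x ω - f x| ∂P ∂ν + 2 * ∫ x, ∫ ω, |g x ω - f x| ∂P ∂ν := by
  set μ := ν.prod P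
  have hdiff : ∀ {w : α → β → ℝ}, Integrable (fun q : α × β => w q.1 q.2 - f q.1) μ →
      Integrable (fun q : α × β => |w q.1 q.2 - g q.1 q.2|) μ := fun hw =>
    (hw.sub hg).abs.congr (.of_forall fun _ => by
      simp only [Pi.sub_apply, sub_sub_sub_cancel_right])
  have hug := hdiff hu
  have hvg := hdiff hv
  rw [← integral_prod _ hu.abs, ← integral_prod _ hv.abs, ← integral_prod _ hg.abs]
  calc ∫ q, |u q.1 q.2 - f q.1| ∂μ
      ≤ ∫ q, |u q.1 q.2 - g q.1 q.2| + |g q.1 q.2 - f q.1| ∂μ :=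
        integral_mono hu.abs (hug.add hg.abs) fun q => abs_sub_le _ _ _
    _ = ∫ ω, ∫ x, |u x ω - g x ω| ∂ν ∂P + ∫ q, |g q.1 q.2 - f q.1| ∂μ := by
        rw [integral_add hug hg.abs, integral_prod_symm _ hug]
    _ ≤ ∫ ω, ∫ x, |v x ω - g x ω| ∂ν ∂P + ∫ q, |g q.1 q.2 - f q.1| ∂μ :=
        add_le_add (integral_mono hug.integral_prod_right hvg.integral_prod_right hsel) le_rfl
    _ = ∫ q, |v q.1 q.2 - g q.1 q.2| ∂μ + ∫ q, |g q.1 q.2 - f q.1| ∂μ := by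
        rw [integral_prod_symm _ hvg]
    _ ≤ ∫ q, |v q.1 q.2 - f q.1| + |g q.1 q.2 - f q.1| ∂μ + ∫ q, |g q.1 q.2 - f q.1| ∂μ := by
        refine add_le_add (integral_mono hvg (hv.abs.add hg.abs) fun q => ?_) le_rfl
        simpa only [abs_sub_comm (f _)] using abs_sub_le (v q.1 q.2) (f q.1) (g q.1 q.2)
    _ = ∫ q, |v q.1 q.2 - f q.1| ∂μ + 2 * ∫ q, |g q.1 q.2 - f q.1| ∂μ := by
        rw [integral_add hv.abs hg.abs]; ring

end General

section Kernel

variable {K : ℝ → ℝ}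

theorem integrable_Kh_s4 (hK : Integrable K) (η : ℝ) : Integrable (Kh K η) := by
  rcases eq_or_ne η 0 with rfl | hη
  · have h0 : Kh K 0 = 0 := funext fun x => by simp [Kh]
    exact h0 ▸ integrable_zero ℝ ℝ volume
  · exact (hK.comp_div hη).const_mul η⁻¹

theorem integral_norm_Kh_le (η : ℝ) : ∫ x, ‖Kh K η x‖ ≤ ∫ x, ‖K x‖ := by
  have h : ∫ x, ‖Kh K η x‖ = (|η|⁻¹ * |η|) * ∫ x, ‖K x‖ := by
    simp only [Kh, norm_mul, norm_inv, Real.norm_eq_abs, integral_const_mul, mul_assoc]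
    rw [Measure.integral_comp_div (fun x => |K x|), smul_eq_mul]
  rw [h]
  rcases eq_or_ne η 0 with rfl | hη
  · simpa using integral_nonneg fun x => norm_nonneg (K x)
  · rw [inv_mul_cancel₀ (abs_ne_zero.mpr hη), one_mul]

theorem norm_setIntegral_Kh_sub_le (hK : Integrable K) (η c : ℝ) (s : Set ℝ) :
    ‖∫ y in s, Kh K η (c - y)‖ ≤ ∫ x, ‖K x‖ :=
  calc ‖∫ y in s, Kh K η (c - y)‖ ≤ ∫ y in s, ‖Kh K η (c - y)‖ :=
        norm_integral_le_integral_norm _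
    _ ≤ ∫ y, ‖Kh K η (c - y)‖ :=
        setIntegral_le_integral ((integrable_Kh_s4 hK η).comp_sub_left c).norm
          (.of_forall fun _ => norm_nonneg _)
    _ = ∫ x, ‖Kh K η x‖ := integral_sub_left_eq_self (fun x => ‖Kh K η x‖) volume c
    _ ≤ ∫ x, ‖K x‖ := integral_norm_Kh_le η

theorem measurable_setIntegral_Iic_Kh (hK : Measurable K) (η : ℝ) :
    Measurable fun p : ℝ × ℝ => ∫ y in Set.Iic (-p.2), Kh K η (-p.1 - y) := by
  refine measurable_setIntegral_of_measurableSet_prod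
    (f := fun (p : ℝ × ℝ) y => Kh K η (-p.1 - y)) ?_ ?_
  · exact measurable_const.mul (hK.comp ((measurable_fst.fst.neg.sub measurable_snd).div_const η))
  · exact measurableSet_le measurable_snd measurable_fst.snd.neg

end Kernel

section Estimator

variable {K : ℝ → ℝ} {l₀ r₀ ε : ℝ} {Ω : Type*}

theorem abs_monoEst_le (hK : Integrable K) (ℓ h lo hi : ℝ) (g : ℝ → ℝ) (x : ℝ) :
    |monoEst K l₀ r₀ ε ℓ h lo hi g x| ≤ |lo| + (∫ y, ‖K y‖) * |hi - lo| := by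
  refine (abs_add_le _ _).trans (add_le_add le_rfl ?_)
  rw [← Real.norm_eq_abs]
  exact intervalIntegral.norm_integral_le_of_norm_le_const fun z _ =>
    by simpa only [neg_sub_left, sub_neg_eq_add] using
      norm_setIntegral_Kh_sub_le hK ℓ (-binvEst K l₀ r₀ ε h g z) (Set.Iic (-x))

theorem abs_pracEst_le (hK : Integrable K) (mb ℓ h : ℝ) (bhat : Ω → ℝ → ℝ) (x : ℝ) (ω : Ω) :
    |pracEst K l₀ r₀ ε mb ℓ h bhat x ω| ≤
      |bhat ω (r₀ + ε)| + (∫ y, ‖K y‖) * |bhat ω (l₀ - ε) - bhat ω (r₀ + ε)| := by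
  unfold pracEst
  rw [Set.indicator_apply]
  split_ifs
  · exact abs_monoEst_le hK ℓ h _ _ _ x
  · rw [abs_zero]
    positivity

variable [MeasurableSpace Ω]

theorem measurable_binvEst (hK : Measurable K) (h : ℝ) {g : Ω → ℝ → ℝ}
    (hg : Measurable (Function.uncurry g)) :
    Measurable fun p : Ω × ℝ => binvEst K l₀ r₀ ε h (g p.1) p.2 := by
  refine measurable_const.add (measurable_setIntegral_of_measurableSet_prod ?_ ?_)
  · exact (measurable_setIntegral_Iic_Kh hK h).comp
      ((hg.comp (measurable_fst.fst.prodMk measurable_snd)).prodMk measurable_fst.snd)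
  · exact measurableSet_Icc.preimage measurable_snd

theorem measurable_monoEst (hK : Measurable K) (ℓ h : ℝ) {lo hi : Ω → ℝ} {g : Ω → ℝ → ℝ}
    (hlo : Measurable lo) (hhi : Measurable hi) (hg : Measurable (Function.uncurry g)) :
    Measurable fun p : ℝ × Ω => monoEst K l₀ r₀ ε ℓ h (lo p.2) (hi p.2) (g p.2) p.1 := by
  refine (hlo.comp measurable_snd).add (measurable_intervalIntegral_of_measurable ?_
    (hlo.comp measurable_snd) (hhi.comp measurable_snd))
  exact (measurable_setIntegral_Iic_Kh hK ℓ).comp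
    (((measurable_binvEst hK h hg).comp (measurable_fst.snd.prodMk measurable_snd)).prodMk
      measurable_fst.fst)

theorem measurable_pracEst (hK : Measurable K) (mb ℓ h : ℝ) {bhat : Ω → ℝ → ℝ}
    (hbhat : Measurable (Function.uncurry bhat)) :
    Measurable fun p : ℝ × Ω => pracEst K l₀ r₀ ε mb ℓ h bhat p.1 p.2 := by
  have hsec : ∀ x, Measurable fun ω => bhat ω x := fun x =>
    hbhat.comp (measurable_id.prodMk measurable_const)
  exact (measurable_monoEst hK ℓ h (hsec _) (hsec _) hbhat).ite
    (measurableSet_le ((hsec _).sub (hsec _)) measurable_const |>.preimage measurable_snd)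
    measurable_const

theorem integrable_pracEst (hK : Integrable K) {mb : ℝ} {ν : Measure ℝ} [IsFiniteMeasure ν]
    {P : Measure Ω} [SFinite P] {ℓ h : Ω → ℝ} {bhat : Ω → ℝ → ℝ}
    (hmeas : Measurable fun q : ℝ × Ω => pracEst K l₀ r₀ ε mb (ℓ q.2) (h q.2) bhat q.1 q.2)
    (hr : Integrable (fun ω => bhat ω (r₀ + ε)) P) (hl : Integrable (fun ω => bhat ω (l₀ - ε)) P) :
    Integrable (fun q : ℝ × Ω => pracEst K l₀ r₀ ε mb (ℓ q.2) (h q.2) bhat q.1 q.2) (ν.prod P) :=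
  ((hr.abs.add ((hl.sub hr).abs.const_mul _)).comp_snd ν).mono' hmeas.aestronglyMeasurable
    (.of_forall fun q => abs_pracEst_le hK mb _ _ bhat q.1 q.2)

theorem integral_integral_abs_pracEst_select_sub_le (hKm : Measurable K) (hK : Integrable K)
    {mb : ℝ} {ν : Measure ℝ} [IsFiniteMeasure ν] {P : Measure Ω} [IsFiniteMeasure P]
    {b : ℝ → ℝ} {bhat : Ω → ℝ → ℝ} (hbhat : Measurable (Function.uncurry bhat))
    (hr : Integrable (fun ω => bhat ω (r₀ + ε)) P) (hl : Integrable (fun ω => bhat ω (l₀ - ε)) P)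
    (hb : Integrable b ν) (hZ : Integrable (fun q : ℝ × Ω => bhat q.2 q.1 - b q.1) (ν.prod P))
    {s : Finset ℝ} (hs : s.Nonempty) {ℓ h : Ω → ℝ} (hℓ : Measurable ℓ) (hh : Measurable h)
    (hmem : ∀ ω, ℓ ω ∈ s ∧ h ω ∈ s)
    (hargmin : ∀ ω, ∀ ℓ' ∈ s, ∀ h' ∈ s,
      ∫ x, |pracEst K l₀ r₀ ε mb (ℓ ω) (h ω) bhat x ω - bhat ω x| ∂ν ≤
        ∫ x, |pracEst K l₀ r₀ ε mb ℓ' h' bhat x ω - bhat ω x| ∂ν) :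
    ∫ x, ∫ ω, |pracEst K l₀ r₀ ε mb (ℓ ω) (h ω) bhat x ω - b x| ∂P ∂ν ≤
      (s ×ˢ s).inf' (hs.product hs)
        (fun p => ∫ x, ∫ ω, |pracEst K l₀ r₀ ε mb p.1 p.2 bhat x ω - b x| ∂P ∂ν) +
      2 * ∫ x, ∫ ω, |bhat ω x - b x| ∂P ∂ν := by
  have hest : ∀ ℓ h : Ω → ℝ,
      Measurable (fun q : ℝ × Ω => pracEst K l₀ r₀ ε mb (ℓ q.2) (h q.2) bhat q.1 q.2) →
      Integrable (fun q : ℝ × Ω => pracEst K l₀ r₀ ε mb (ℓ q.2) (h q.2) bhat q.1 q.2 - b q.1)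
        (ν.prod P) := fun ℓ h hm =>
    (integrable_pracEst hK hm hr hl).sub (hb.comp_fst P)
  have hsel : Measurable fun q : ℝ × Ω => pracEst K l₀ r₀ ε mb (ℓ q.2) (h q.2) bhat q.1 q.2 :=
    measurable_select_of_mem_finset (F := fun p q => pracEst K l₀ r₀ ε mb p.1 p.2 bhat q.1 q.2)
      ((hℓ.prodMk hh).comp measurable_snd) (fun q => Finset.mem_product.2 (hmem q.2))
      fun p _ => measurable_pracEst hKm mb p.1 p.2 hbhat
  obtain ⟨p₀, hp₀, hp₀_eq⟩ := Finset.exists_mem_eq_inf' (hs.product hs) fun p =>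
    ∫ x, ∫ ω, |pracEst K l₀ r₀ ε mb p.1 p.2 bhat x ω - b x| ∂P ∂ν
  rw [hp₀_eq]
  exact integral_integral_abs_sub_le_of_forall_le (g := fun x ω => bhat ω x)
    (hest ℓ h hsel) (hest (fun _ => p₀.1) (fun _ => p₀.2) (measurable_pracEst hKm mb _ _ hbhat))
    hZ fun ω => hargmin ω _ (Finset.mem_product.1 hp₀).1 _ (Finset.mem_product.1 hp₀).2

end Estimator

theorem stmt4_general (l₀ r₀ ε mb : ℝ) (K b b' : ℝ → ℝ)
    (hlr : l₀ < r₀) (hε : 0 < ε)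
    -- kernel assumptions
    (hK2 : ContDiff ℝ 2 K)
    (hKsupp : ∀ y, 1 < |y| → K y = 0)
    -- `b` is continuously differentiable on `I_{2ε}` with `b' ≤ -mb` there
    (hbd : ∀ x ∈ Set.Icc (l₀ - 2 * ε) (r₀ + 2 * ε), HasDerivAt b (b' x) x)
    -- the probability space and the estimator `b̂`
    (Ω : Type) [MeasurableSpace Ω] (P : Measure Ω) [IsProbabilityMeasure P]
    (bhat : Ω → ℝ → ℝ) (hbhat : Measurable (Function.uncurry bhat))
    (hsq : ∀ x ∈ Set.Icc (l₀ - 2 * ε) (r₀ + 2 * ε),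
      Integrable (fun ω => |bhat ω x - b x| ^ 2) P)
    (hRint : IntegrableOn (fun x => ∫ ω, |bhat ω x - b x| ^ 2 ∂P)
      (Set.Icc (l₀ - 2 * ε) (r₀ + 2 * ε)))
    -- the bandwidths set `𝔥_b`, a nonempty finite subset of `(0, min{1, m_b} ε)`
    (𝔥 : Finset ℝ) (h𝔥ne : 𝔥.Nonempty)
    -- a measurable selection `(ℓ̃, h̃)` of a minimizer of the bandwidths selection criterion
    (ltil htil : Ω → ℝ)
    (hlmeas : Measurable ltil) (hhmeas : Measurable htil)
    (hmem : ∀ ω, ltil ω ∈ 𝔥 ∧ htil ω ∈ 𝔥)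
    (hargmin : ∀ ω, ∀ ℓ ∈ 𝔥, ∀ h ∈ 𝔥,
      (∫ x in Set.Icc l₀ r₀,
        |pracEst K l₀ r₀ ε mb (ltil ω) (htil ω) bhat x ω - bhat ω x|) ≤
      ∫ x in Set.Icc l₀ r₀, |pracEst K l₀ r₀ ε mb ℓ h bhat x ω - bhat ω x|) :
    (∫ x in Set.Icc l₀ r₀, ∫ ω,
        |pracEst K l₀ r₀ ε mb (ltil ω) (htil ω) bhat x ω - b x| ∂P) ≤
      (𝔥 ×ˢ 𝔥).inf' (h𝔥ne.product h𝔥ne) (fun p =>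
        ∫ x in Set.Icc l₀ r₀, ∫ ω, |pracEst K l₀ r₀ ε mb p.1 p.2 bhat x ω - b x| ∂P) +
      2 * Real.sqrt (r₀ - l₀) *
        Real.sqrt (∫ x in Set.Icc (l₀ - 2 * ε) (r₀ + 2 * ε),
          ∫ ω, |bhat ω x - b x| ^ 2 ∂P) := by
  simp only [sq_abs] at hsq hRint ⊢
  have hsub : Set.Icc l₀ r₀ ⊆ Set.Icc (l₀ - 2 * ε) (r₀ + 2 * ε) :=
    Set.Icc_subset_Icc (by linarith) (by linarith)
  have hK : Integrable K := hK2.continuous.integrable_of_hasCompactSupport <|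
    HasCompactSupport.intro (isCompact_Icc (a := -1) (b := 1)) fun y hy =>
      hKsupp y (by rwa [Set.mem_Icc, ← abs_le, not_le] at hy)
  have hbhat_int : ∀ x ∈ Set.Icc (l₀ - 2 * ε) (r₀ + 2 * ε), Integrable (fun ω => bhat ω x) P :=
    fun x hx => integrable_of_integrable_sq_sub_const
      (hbhat.comp (measurable_id.prodMk measurable_const)).aestronglyMeasurable (b x) (hsq x hx)
  have hb : IntegrableOn b (Set.Icc l₀ r₀) := ContinuousOn.integrableOn_Icc fun x hx =>
    (hbd x (hsub hx)).continuousAt.continuousWithinAt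
  have hZ : MemLp (fun q : ℝ × Ω => bhat q.2 q.1 - b q.1) 2
      ((volume.restrict (Set.Icc l₀ r₀)).prod P) :=
    memLp_two_prod_of_integrable_sq
      ((hbhat.comp measurable_swap).aestronglyMeasurable.sub (hb.comp_fst P).aestronglyMeasurable)
      ((ae_restrict_mem measurableSet_Icc).mono fun x hx => hsq x (hsub hx)) (hRint.mono_set hsub)
  refine (integral_integral_abs_pracEst_select_sub_le hK2.continuous.measurable hK hbhat
    (hbhat_int _ ⟨by linarith, by linarith⟩) (hbhat_int _ ⟨by linarith, by linarith⟩) hb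
    (hZ.integrable one_le_two) h𝔥ne hlmeas hhmeas hmem hargmin).trans ?_
  rw [mul_assoc]
  gcongr
  calc _ ≤ √(r₀ - l₀) * √(∫ x in Set.Icc l₀ r₀, ∫ ω, (bhat ω x - b x) ^ 2 ∂P) := by
        simpa [Real.volume_real_Icc_of_le hlr.le] using
          integral_integral_abs_le_sqrt_mul_sqrt (Z := fun x ω => bhat ω x - b x) hZ
    _ ≤ _ := mul_le_mul_of_nonneg_left (Real.sqrt_le_sqrt <| setIntegral_mono_set hRint
        (.of_forall fun x => integral_nonneg fun ω => sq_nonneg _) hsub.eventuallyLE)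
        (Real.sqrt_nonneg _)

/-- Remark 2.7.(2): `L¹`-risk bound for the adaptive practical estimator `b̃_{ℓ̃,h̃}`. -/
theorem stmt4 (l₀ r₀ ε mb : ℝ) (K b b' binv : ℝ → ℝ)
    (hlr : l₀ < r₀) (hε : 0 < ε) (hε1 : ε ≤ 1) (hmb : 0 < mb)
    -- kernel assumptions
    (hK0 : ∀ y, 0 ≤ K y) (hK2 : ContDiff ℝ 2 K) (hKsymm : ∀ y, K (-y) = K y)
    (hKsupp : ∀ y, 1 < |y| → K y = 0) (hKint : ∫ y, K y = 1)
    -- `b` is continuously differentiable on `I_{2ε}` with `b' ≤ -mb` there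
    (hbd : ∀ x ∈ Set.Icc (l₀ - 2 * ε) (r₀ + 2 * ε), HasDerivAt b (b' x) x)
    (hb'c : ContinuousOn b' (Set.Icc (l₀ - 2 * ε) (r₀ + 2 * ε)))
    (hb'le : ∀ x ∈ Set.Icc (l₀ - 2 * ε) (r₀ + 2 * ε), b' x ≤ -mb)
    -- `binv` is the inverse of `b` on `I_{2ε}`
    (hbinv : ∀ x ∈ Set.Icc (l₀ - 2 * ε) (r₀ + 2 * ε), binv (b x) = x)
    -- the probability space and the estimator `b̂`
    (Ω : Type) [MeasurableSpace Ω] (P : Measure Ω) [IsProbabilityMeasure P]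
    (bhat : Ω → ℝ → ℝ) (hbhat : Measurable (Function.uncurry bhat))
    (hsq : ∀ x ∈ Set.Icc (l₀ - 2 * ε) (r₀ + 2 * ε),
      Integrable (fun ω => |bhat ω x - b x| ^ 2) P)
    (hRint : IntegrableOn (fun x => ∫ ω, |bhat ω x - b x| ^ 2 ∂P)
      (Set.Icc (l₀ - 2 * ε) (r₀ + 2 * ε)))
    -- the bandwidths set `𝔥_b`, a nonempty finite subset of `(0, min{1, m_b} ε)`
    (𝔥 : Finset ℝ) (h𝔥ne : 𝔥.Nonempty) (h𝔥 : ∀ u ∈ 𝔥, u ∈ Set.Ioo 0 (min 1 mb * ε))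
    -- a measurable selection `(ℓ̃, h̃)` of a minimizer of the bandwidths selection criterion
    (ltil htil : Ω → ℝ)
    (hlmeas : Measurable ltil) (hhmeas : Measurable htil)
    (hmem : ∀ ω, ltil ω ∈ 𝔥 ∧ htil ω ∈ 𝔥)
    (hargmin : ∀ ω, ∀ ℓ ∈ 𝔥, ∀ h ∈ 𝔥,
      (∫ x in Set.Icc l₀ r₀,
        |pracEst K l₀ r₀ ε mb (ltil ω) (htil ω) bhat x ω - bhat ω x|) ≤
      ∫ x in Set.Icc l₀ r₀, |pracEst K l₀ r₀ ε mb ℓ h bhat x ω - bhat ω x|) :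
    (∫ x in Set.Icc l₀ r₀, ∫ ω,
        |pracEst K l₀ r₀ ε mb (ltil ω) (htil ω) bhat x ω - b x| ∂P) ≤
      (𝔥 ×ˢ 𝔥).inf' (h𝔥ne.product h𝔥ne) (fun p =>
        ∫ x in Set.Icc l₀ r₀, ∫ ω, |pracEst K l₀ r₀ ε mb p.1 p.2 bhat x ω - b x| ∂P) +
      2 * Real.sqrt (r₀ - l₀) *
        Real.sqrt (∫ x in Set.Icc (l₀ - 2 * ε) (r₀ + 2 * ε),
          ∫ ω, |bhat ω x - b x| ^ 2 ∂P) :=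
  stmt4_general l₀ r₀ ε mb K b b' hlr hε hK2 hKsupp hbd Ω P bhat hbhat hsq hRint 𝔥 h𝔥ne ltil htil
    hlmeas hhmeas hmem hargmin
end

section
/- Under the stated assumptions, if 0 < ℓ < ε, then sup_{x ∈ I₀} |b_ℓ(x) − b(x)| ≤ ℓ · ‖b'‖_{∞, I_ε} · ∫_{−∞}^{∞} |y| K(y) dy. -/
/-!
Substituting `z = b w` in the outer integral and evaluating the inner one turns `b_ℓ(x)` into
`b(r_ε) + ∫_{I_ε} |b'(w)| H((x - w) / ℓ) dw`, where `H(t) = ∫_t^∞ K` is the tail of the kernel,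
while the fundamental theorem of calculus gives `b(x) = b(r_ε) + ∫_{I_ε} |b'(w)| 1[x ≤ w] dw`.
Hence `b_ℓ(x) - b(x) = ∫_{I_ε} |b'(w)| E((x - w) / ℓ) dw` with `E = H - 1_{(-∞, 0]}`, which is at
most `‖b'‖_∞ ℓ ∫ |E|`, and integrating by parts on either side of `0` gives
`∫ |E| = ∫ |y| K(y) dy`.
-/

open MeasureTheory

open Set

lemma integrable_of_integrableOn_Icc_of_eq_zero {g : ℝ → ℝ}
    (hg : IntegrableOn g (Icc (-1) 1)) (hg₀ : ∀ y, 1 < |y| → g y = 0) : Integrable g :=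
  (integrableOn_iff_integrable_of_support_subset fun y hy =>
    abs_le.1 (not_lt.1 fun h => hy (hg₀ y h))).1 hg

lemma integral_eq_intervalIntegral_of_eq_zero {g : ℝ → ℝ} (hg₀ : ∀ y, 1 < |y| → g y = 0) :
    ∫ y, g y = ∫ y in (-1)..1, g y := by
  rw [intervalIntegral.integral_of_le (by norm_num), ← integral_Icc_eq_integral_Ioc,
    setIntegral_eq_integral_of_forall_compl_eq_zero (s := Icc (-1) 1) fun y hy =>
      hg₀ y (not_le.1 fun h => hy (abs_le.1 h))]

lemma setIntegral_Ioi_comp_sub_right {E : Type*} [NormedAddCommGroup E] [NormedSpace ℝ E]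
    (g : ℝ → E) (a c : ℝ) :
    ∫ u in Ioi a, g (u - c) = ∫ v in Ioi (a - c), g v := by
  have h := (measurePreserving_sub_right volume c).setIntegral_preimage_emb
    (Homeomorph.subRight c).measurableEmbedding g (Ioi (a - c))
  rwa [preimage_sub_const_Ioi, sub_add_cancel] at h

-- `∫_t^∞ K` for `K` supported in `[-1, 1]`; the finite upper limit makes it a primitive of `-K`.
noncomputable def kernelTail (K : ℝ → ℝ) (t : ℝ) : ℝ := ∫ s in t..1, K s

noncomputable def tailError (K : ℝ → ℝ) (t : ℝ) : ℝ := kernelTail K t - (Iic 0).indicator 1 t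

section Kernel

variable {K : ℝ → ℝ} (hKc : Continuous K) (hKsupp : ∀ y, 1 < |y| → K y = 0)
include hKc

lemma hasDerivAt_kernelTail (t : ℝ) : HasDerivAt (kernelTail K) (-K t) t :=
  intervalIntegral.integral_hasDerivAt_left (hKc.intervalIntegrable t 1)
    (hKc.stronglyMeasurableAtFilter _ _) hKc.continuousAt

lemma continuous_kernelTail : Continuous (kernelTail K) :=
  continuous_iff_continuousAt.2 fun t => (hasDerivAt_kernelTail hKc t).continuousAt

include hKsupp

lemma integrable_kernel : Integrable K :=
  integrable_of_integrableOn_Icc_of_eq_zero hKc.integrableOn_Icc hKsupp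

lemma setIntegral_Ioi_eq_kernelTail (t : ℝ) : ∫ s in Ioi t, K s = kernelTail K t := by
  have hK := (integrable_kernel hKc hKsupp).integrableOn (s := Ioi t)
  rw [kernelTail, ← intervalIntegral.integral_Ioi_sub_Ioi' hK
    (integrable_kernel hKc hKsupp).integrableOn,
    setIntegral_eq_zero_of_forall_eq_zero (t := Ioi 1) fun y hy =>
      hKsupp y (lt_of_lt_of_le hy (le_abs_self y)), sub_zero]

lemma kernelTail_of_one_le {t : ℝ} (ht : 1 ≤ t) : kernelTail K t = 0 := by
  rw [← setIntegral_Ioi_eq_kernelTail hKc hKsupp]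
  exact setIntegral_eq_zero_of_forall_eq_zero fun y (hy : y ∈ Ioi t) =>
    hKsupp y ((ht.trans_lt hy).trans_le (le_abs_self y))

lemma intervalIntegral_kernelTail_zero_one :
    ∫ t in (0 : ℝ)..1, kernelTail K t = ∫ t in (0 : ℝ)..1, t * K t := by
  have hparts := intervalIntegral.integral_mul_deriv_eq_deriv_mul
    (fun t _ => hasDerivAt_id t) (fun t _ => (hasDerivAt_kernelTail hKc t).neg)
    intervalIntegrable_const (hKc.neg.neg.intervalIntegrable 0 1)
  simp only [id, Pi.neg_apply, kernelTail_of_one_le hKc hKsupp le_rfl, one_mul, mul_neg,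
    zero_mul, neg_zero, sub_zero, intervalIntegral.integral_neg, sub_neg_eq_add, zero_add,
    neg_neg] at hparts
  exact hparts.symm

lemma setIntegral_Iic_Kh_eq_kernelTail {ℓ : ℝ} (hℓ : 0 < ℓ) (c x : ℝ) :
    ∫ y in Iic (-x), Kh K ℓ (-c - y) = kernelTail K ((x - c) / ℓ) := by
  calc ∫ y in Iic (-x), Kh K ℓ (-c - y)
      = ∫ u in Ioi x, Kh K ℓ (u - c) := by
        rw [← integral_comp_neg_Ioi]; simp only [sub_neg_eq_add, neg_add_eq_sub]
    _ = ∫ v in Ioi (x - c), Kh K ℓ v := setIntegral_Ioi_comp_sub_right _ x c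
    _ = ∫ s in Ioi ((x - c) / ℓ), K s := by
        simp only [Kh, integral_const_mul, div_eq_inv_mul,
          integral_comp_mul_left_Ioi K _ (inv_pos.2 hℓ), smul_eq_mul, inv_inv,
          inv_mul_cancel_left₀ hℓ.ne']
    _ = kernelTail K ((x - c) / ℓ) := setIntegral_Ioi_eq_kernelTail hKc hKsupp _

variable (hKint : ∫ y, K y = 1)
include hKint

lemma kernelTail_of_le_neg_one {t : ℝ} (ht : t ≤ -1) :
    kernelTail K t = 1 := by
  rw [← setIntegral_Ioi_eq_kernelTail hKc hKsupp, ← integral_Ici_eq_integral_Ioi,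
    setIntegral_eq_integral_of_forall_compl_eq_zero (s := Ici t) fun y hy => ?_, hKint]
  exact hKsupp y (lt_abs.2 (Or.inr (by linarith [not_le.1 (show ¬ t ≤ y from hy)])))

lemma kernelTail_mem_Icc (hK0 : ∀ y, 0 ≤ K y) (t : ℝ) :
    kernelTail K t ∈ Icc 0 1 := by
  rw [← setIntegral_Ioi_eq_kernelTail hKc hKsupp]
  exact ⟨setIntegral_nonneg measurableSet_Ioi fun y _ => hK0 y,
    hKint ▸ setIntegral_le_integral (integrable_kernel hKc hKsupp) (.of_forall hK0)⟩

lemma intervalIntegral_one_sub_kernelTail :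
    ∫ t in (-1 : ℝ)..0, (1 - kernelTail K t) = ∫ t in (-1 : ℝ)..0, -t * K t := by
  have hparts := intervalIntegral.integral_mul_deriv_eq_deriv_mul
    (fun t _ => hasDerivAt_neg t) (fun t _ => (hasDerivAt_kernelTail hKc t).const_sub 1)
    intervalIntegrable_const (hKc.neg.neg.intervalIntegrable (-1) 0)
  simp only [neg_neg, kernelTail_of_le_neg_one hKc hKsupp hKint le_rfl, neg_zero, zero_mul,
    sub_self, mul_zero, neg_one_mul, intervalIntegral.integral_neg, sub_neg_eq_add,
    zero_add] at hparts
  exact hparts.symm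

lemma tailError_of_one_lt_abs {t : ℝ} (ht : 1 < |t|) : tailError K t = 0 := by
  rcases lt_abs.1 ht with ht | ht
  · rw [tailError, kernelTail_of_one_le hKc hKsupp ht.le,
      indicator_of_notMem (show t ∉ Iic 0 from not_le.2 (by linarith : (0 : ℝ) < t)), sub_zero]
  · rw [tailError, kernelTail_of_le_neg_one hKc hKsupp hKint (by linarith),
      indicator_of_mem (show t ∈ Iic 0 from (by linarith : t ≤ 0)), Pi.one_apply, sub_self]

lemma integrable_tailError : Integrable (tailError K) :=
  integrable_of_integrableOn_Icc_of_eq_zero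
    ((continuous_kernelTail hKc).integrableOn_Icc.sub
      ((integrableOn_const (C := (1 : ℝ)) measure_Icc_lt_top.ne).indicator measurableSet_Iic))
    fun _ => tailError_of_one_lt_abs hKc hKsupp hKint

lemma integral_abs_tailError (hK0 : ∀ y, 0 ≤ K y) : ∫ t, |tailError K t| = ∫ y, |y| * K y := by
  have hE := integrable_tailError hKc hKsupp hKint
  have hH := kernelTail_mem_Icc hKc hKsupp hKint hK0
  have hyK : Continuous fun y => |y| * K y := continuous_abs.mul hKc
  rw [integral_eq_intervalIntegral_of_eq_zero fun t ht => by
      rw [tailError_of_one_lt_abs hKc hKsupp hKint ht, abs_zero],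
    integral_eq_intervalIntegral_of_eq_zero fun y hy => by rw [hKsupp y hy, mul_zero],
    ← intervalIntegral.integral_add_adjacent_intervals (b := 0)
      hE.abs.intervalIntegrable hE.abs.intervalIntegrable,
    ← intervalIntegral.integral_add_adjacent_intervals (b := 0)
      (hyK.intervalIntegrable _ _) (hyK.intervalIntegrable _ _)]
  congr 1
  · calc ∫ t in (-1 : ℝ)..0, |tailError K t|
        = ∫ t in (-1 : ℝ)..0, (1 - kernelTail K t) := by
          refine intervalIntegral.integral_congr fun t ht => ?_
          rw [uIcc_of_le (by norm_num)] at ht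
          rw [tailError, indicator_of_mem (show t ∈ Iic 0 from ht.2), Pi.one_apply,
            abs_of_nonpos (sub_nonpos.2 (hH t).2), neg_sub]
      _ = ∫ t in (-1 : ℝ)..0, |t| * K t := by
          rw [intervalIntegral_one_sub_kernelTail hKc hKsupp hKint]
          refine intervalIntegral.integral_congr fun t ht => ?_
          rw [uIcc_of_le (by norm_num)] at ht
          rw [abs_of_nonpos ht.2]
  · -- only almost everywhere: it fails at `t = 0`, where `tailError K 0 = kernelTail K 0 - 1`
    calc ∫ t in (0 : ℝ)..1, |tailError K t|
        = ∫ t in (0 : ℝ)..1, kernelTail K t := by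
          refine intervalIntegral.integral_congr_ae (.of_forall fun t ht => ?_)
          rw [uIoc_of_le zero_le_one] at ht
          rw [tailError, indicator_of_notMem (show t ∉ Iic 0 from not_le.2 ht.1), sub_zero,
            abs_of_nonneg (hH t).1]
      _ = ∫ t in (0 : ℝ)..1, |t| * K t := by
          rw [intervalIntegral_kernelTail_zero_one hKc hKsupp]
          refine intervalIntegral.integral_congr fun t ht => ?_
          rw [uIcc_of_le zero_le_one] at ht
          rw [abs_of_nonneg ht.1]

end Kernel

section ChangeOfVariables

variable {a c : ℝ} {f f' : ℝ → ℝ}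

lemma integral_comp_leftInvOn_eq_setIntegral_abs_deriv_mul {finv : ℝ → ℝ} (hac : a ≤ c)
    (hf : ∀ w ∈ Icc a c, HasDerivAt f (f' w) w) (hf' : ∀ w ∈ Icc a c, f' w ≤ 0)
    (hinv : LeftInvOn finv f (Icc a c)) (g : ℝ → ℝ) :
    ∫ z in f c..f a, g (finv z) = ∫ w in Icc a c, |f' w| * g w := by
  have hfc : ContinuousOn f (Icc a c) := fun w hw => (hf w hw).continuousAt.continuousWithinAt
  have hanti : AntitoneOn f (Icc a c) :=
    antitoneOn_of_hasDerivWithinAt_nonpos (convex_Icc a c) hfc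
      (fun w hw => (hf w (interior_subset hw)).hasDerivWithinAt)
      fun w hw => hf' w (interior_subset hw)
  rw [intervalIntegral.integral_of_le (hanti ⟨le_rfl, hac⟩ ⟨hac, le_rfl⟩ hac),
    ← integral_Icc_eq_integral_Ioc, ← hfc.image_Icc_of_antitoneOn hac hanti,
    integral_image_eq_integral_abs_deriv_smul measurableSet_Icc
      (fun w hw => (hf w hw).hasDerivWithinAt) hinv.injOn]
  exact setIntegral_congr_fun measurableSet_Icc fun w hw => by rw [smul_eq_mul, hinv hw]

lemma eq_add_setIntegral_abs_deriv_mul_indicator {x : ℝ} (hx : x ∈ Icc a c)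
    (hf : ∀ w ∈ Icc a c, HasDerivAt f (f' w) w) (hf'c : ContinuousOn f' (Icc a c))
    (hf' : ∀ w ∈ Icc a c, f' w ≤ 0) :
    f x = f c + ∫ w in Icc a c, (Ici x).indicator (fun w => |f' w|) w := by
  have hsub : uIcc x c ⊆ Icc a c := uIcc_of_le hx.2 ▸ Icc_subset_Icc_left hx.1
  have hinter : Icc a c ∩ Ici x = Icc x c := by
    ext w
    simp only [mem_inter_iff, mem_Icc, mem_Ici]
    exact ⟨fun h => ⟨h.2, h.1.2⟩, fun h => ⟨⟨hx.1.trans h.1, h.2⟩, h.1⟩⟩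
  have hftc : ∫ w in x..c, f' w = f c - f x :=
    intervalIntegral.integral_eq_sub_of_hasDerivAt (fun w hw => hf w (hsub hw))
      ((hf'c.mono hsub).intervalIntegrable)
  calc f x = f c - ∫ w in x..c, f' w := by rw [hftc, sub_sub_cancel]
    _ = f c + ∫ w in Icc x c, |f' w| := by
      rw [sub_eq_add_neg, ← intervalIntegral.integral_neg, intervalIntegral.integral_of_le hx.2,
        ← integral_Icc_eq_integral_Ioc]
      congr 1
      refine setIntegral_congr_fun measurableSet_Icc fun w hw => ?_
      rw [abs_of_nonpos (hf' w (hsub (uIcc_of_le hx.2 ▸ hw)))]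
    _ = f c + ∫ w in Icc a c, (Ici x).indicator (fun w => |f' w|) w := by
      rw [setIntegral_indicator measurableSet_Ici, hinter]

end ChangeOfVariables

lemma add_integral_kernelTail_sub_eq_setIntegral_tailError {K f f' finv : ℝ → ℝ} {a c x ℓ : ℝ}
    (hKc : Continuous K) (hℓ : 0 < ℓ) (hx : x ∈ Icc a c)
    (hf : ∀ w ∈ Icc a c, HasDerivAt f (f' w) w) (hf'c : ContinuousOn f' (Icc a c))
    (hf' : ∀ w ∈ Icc a c, f' w ≤ 0) (hinv : LeftInvOn finv f (Icc a c)) :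
    (f c + ∫ z in f c..f a, kernelTail K ((x - finv z) / ℓ)) - f x =
      ∫ w in Icc a c, |f' w| * tailError K ((x - w) / ℓ) := by
  have hH : Continuous fun w => kernelTail K ((x - w) / ℓ) :=
    (continuous_kernelTail hKc).comp ((continuous_const.sub continuous_id).div_const ℓ)
  have hI : IntegrableOn (fun w => |f' w| * kernelTail K ((x - w) / ℓ)) (Icc a c) :=
    (hf'c.abs.mul hH.continuousOn).integrableOn_Icc
  have hcov := integral_comp_leftInvOn_eq_setIntegral_abs_deriv_mul (hx.1.trans hx.2) hf hf'
    hinv fun w => kernelTail K ((x - w) / ℓ)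
  beta_reduce at hcov
  rw [hcov, eq_add_setIntegral_abs_deriv_mul_indicator hx hf hf'c hf', add_sub_add_left_eq_sub,
    ← integral_sub hI (hf'c.abs.integrableOn_Icc.indicator measurableSet_Ici)]
  refine setIntegral_congr_fun measurableSet_Icc fun w _ => ?_
  by_cases hxw : x ≤ w
  · rw [indicator_of_mem (show w ∈ Ici x from hxw), tailError,
      indicator_of_mem (show (x - w) / ℓ ∈ Iic 0 from
        div_nonpos_of_nonpos_of_nonneg (sub_nonpos.2 hxw) hℓ.le), Pi.one_apply, mul_sub, mul_one]
  · rw [indicator_of_notMem (show w ∉ Ici x from hxw), tailError,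
      indicator_of_notMem (show (x - w) / ℓ ∉ Iic 0 from
        not_le.2 (div_pos (sub_pos.2 (not_le.1 hxw)) hℓ)), sub_zero, sub_zero]

lemma abs_setIntegral_mul_le_mul_integral_abs {α : Type*} [MeasurableSpace α] {μ : Measure α}
    {s : Set α} {φ g : α → ℝ} {M : ℝ} (hs : MeasurableSet s) (hM : 0 ≤ M)
    (hφ : ∀ w ∈ s, |φ w| ≤ M) (hg : Integrable g μ) :
    |∫ w in s, φ w * g w ∂μ| ≤ M * ∫ w, |g w| ∂μ :=
  calc |∫ w in s, φ w * g w ∂μ|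
      ≤ ∫ w in s, |φ w * g w| ∂μ := abs_integral_le_integral_abs
    _ ≤ ∫ w in s, M * |g w| ∂μ :=
      integral_mono_of_nonneg (.of_forall fun _ => abs_nonneg _) (hg.abs.const_mul M).restrict
        ((ae_restrict_iff' hs).2 (.of_forall fun w hw => by
          show |φ w * g w| ≤ M * |g w|
          rw [abs_mul]; exact mul_le_mul_of_nonneg_right (hφ w hw) (abs_nonneg _)))
    _ = M * ∫ w in s, |g w| ∂μ := integral_const_mul M _
    _ ≤ M * ∫ w, |g w| ∂μ :=
      mul_le_mul_of_nonneg_left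
        (setIntegral_le_integral hg.abs (.of_forall fun _ => abs_nonneg _)) hM

lemma integral_comp_sub_div {E : Type*} [NormedAddCommGroup E] [NormedSpace ℝ E]
    (g : ℝ → E) (x ℓ : ℝ) : ∫ w, g ((x - w) / ℓ) = |ℓ| • ∫ t, g t := by
  simp only [sub_div]
  rw [Measure.integral_comp_div (fun u => g (x / ℓ - u)), integral_sub_left_eq_self]

lemma IsCompact.le_biSup_of_continuousOn {α : Type*} [TopologicalSpace α] {s : Set α}
    {f : α → ℝ} (hs : IsCompact s) (hf : ContinuousOn f s) {w : α} (hw : w ∈ s) :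
    f w ≤ ⨆ v ∈ s, f v :=
  le_ciSup₂ (f := fun v (_ : v ∈ s) => f v) ((hs.bddAbove_image hf).mono
    (iUnion_subset fun _ => range_subset_iff.2 fun hv => mem_image_of_mem f hv)) w hw

theorem stmt6_general (l₀ r₀ ε mb : ℝ) (K b b' binv : ℝ → ℝ)
    (hε : 0 < ε) (hmb : 0 < mb)
    -- kernel assumptions
    (hK0 : ∀ y, 0 ≤ K y) (hK2 : ContDiff ℝ 2 K)
    (hKsupp : ∀ y, 1 < |y| → K y = 0) (hKint : ∫ y, K y = 1)
    -- `b` is continuously differentiable on `I_{2ε}` with `b' ≤ -mb` there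
    (hbd : ∀ x ∈ Set.Icc (l₀ - 2 * ε) (r₀ + 2 * ε), HasDerivAt b (b' x) x)
    (hb'c : ContinuousOn b' (Set.Icc (l₀ - 2 * ε) (r₀ + 2 * ε)))
    (hb'le : ∀ x ∈ Set.Icc (l₀ - 2 * ε) (r₀ + 2 * ε), b' x ≤ -mb)
    -- `binv` is the inverse of `b` on `I_{2ε}`
    (hbinv : ∀ x ∈ Set.Icc (l₀ - 2 * ε) (r₀ + 2 * ε), binv (b x) = x)
    -- the bandwidth condition
    (ℓ : ℝ) (hℓ0 : 0 < ℓ) :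
    ∀ x ∈ Set.Icc l₀ r₀,
      |(b (r₀ + ε) +
          ∫ z in (b (r₀ + ε))..(b (l₀ - ε)), ∫ y in Set.Iic (-x), Kh K ℓ (-(binv z) - y))
        - b x| ≤
      ℓ * (⨆ v ∈ Set.Icc (l₀ - ε) (r₀ + ε), |b' v|) * ∫ y, |y| * K y := by
  intro x hx
  have hKc := hK2.continuous
  have hsub : Icc (l₀ - ε) (r₀ + ε) ⊆ Icc (l₀ - 2 * ε) (r₀ + 2 * ε) :=
    Icc_subset_Icc (by linarith) (by linarith)
  have hxI : x ∈ Icc (l₀ - ε) (r₀ + ε) := ⟨by linarith [hx.1], by linarith [hx.2]⟩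
  have hb'M (w) (hw : w ∈ Icc (l₀ - ε) (r₀ + ε)) : |b' w| ≤ ⨆ v ∈ Icc (l₀ - ε) (r₀ + ε), |b' v| :=
    isCompact_Icc.le_biSup_of_continuousOn (hb'c.mono hsub).abs hw
  have hE : Integrable fun w => tailError K ((x - w) / ℓ) := by
    simpa only [sub_div] using
      ((integrable_tailError hKc hKsupp hKint).comp_sub_left (x / ℓ)).comp_div hℓ0.ne'
  simp only [setIntegral_Iic_Kh_eq_kernelTail hKc hKsupp hℓ0]
  rw [add_integral_kernelTail_sub_eq_setIntegral_tailError hKc hℓ0 hxI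
    (fun w hw => hbd w (hsub hw)) (hb'c.mono hsub)
    (fun w hw => (hb'le w (hsub hw)).trans (by linarith)) (fun w hw => hbinv w (hsub hw))]
  calc _ ≤ (⨆ v ∈ Icc (l₀ - ε) (r₀ + ε), |b' v|) * ∫ w, |tailError K ((x - w) / ℓ)| :=
        abs_setIntegral_mul_le_mul_integral_abs measurableSet_Icc
          ((abs_nonneg _).trans (hb'M x hxI)) (fun w hw => by rw [abs_abs]; exact hb'M w hw) hE
    _ = _ := by
        rw [integral_comp_sub_div (fun t => |tailError K t|),
          integral_abs_tailError hKc hKsupp hKint hK0, smul_eq_mul, abs_of_pos hℓ0]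
        ring

/-- Lemma 5.2: uniform bound on `I₀` for `b_ℓ - b`, where
`b_ℓ(x) = b(r_ε) + ∫_{b(r_ε)}^{b(l_ε)} ∫_{-∞}^{-x} K_ℓ(-b⁻¹(z) - y) dy dz`. -/
theorem stmt6 (l₀ r₀ ε mb : ℝ) (K b b' binv : ℝ → ℝ)
    (hlr : l₀ < r₀) (hε : 0 < ε) (hε1 : ε ≤ 1) (hmb : 0 < mb)
    -- kernel assumptions
    (hK0 : ∀ y, 0 ≤ K y) (hK2 : ContDiff ℝ 2 K) (hKsymm : ∀ y, K (-y) = K y)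
    (hKsupp : ∀ y, 1 < |y| → K y = 0) (hKint : ∫ y, K y = 1)
    -- `b` is continuously differentiable on `I_{2ε}` with `b' ≤ -mb` there
    (hbd : ∀ x ∈ Set.Icc (l₀ - 2 * ε) (r₀ + 2 * ε), HasDerivAt b (b' x) x)
    (hb'c : ContinuousOn b' (Set.Icc (l₀ - 2 * ε) (r₀ + 2 * ε)))
    (hb'le : ∀ x ∈ Set.Icc (l₀ - 2 * ε) (r₀ + 2 * ε), b' x ≤ -mb)
    -- `binv` is the inverse of `b` on `I_{2ε}`
    (hbinv : ∀ x ∈ Set.Icc (l₀ - 2 * ε) (r₀ + 2 * ε), binv (b x) = x)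
    (hbinvmem : ∀ w ∈ Set.Icc (b (r₀ + 2 * ε)) (b (l₀ - 2 * ε)),
      binv w ∈ Set.Icc (l₀ - 2 * ε) (r₀ + 2 * ε) ∧ b (binv w) = w)
    -- the bandwidth condition
    (ℓ : ℝ) (hℓ0 : 0 < ℓ) (hℓ : ℓ < ε) :
    ∀ x ∈ Set.Icc l₀ r₀,
      |(b (r₀ + ε) +
          ∫ z in (b (r₀ + ε))..(b (l₀ - ε)), ∫ y in Set.Iic (-x), Kh K ℓ (-(binv z) - y))
        - b x| ≤
      ℓ * (⨆ v ∈ Set.Icc (l₀ - ε) (r₀ + ε), |b' v|) * ∫ y, |y| * K y :=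
  stmt6_general l₀ r₀ ε mb K b b' binv hε hmb hK0 hK2 hKsupp hKint hbd hb'c hb'le hbinv ℓ hℓ0
end
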